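/- arXiv:2102.05094 — 4 statements merged into one kernel-verified Lean document; each statement's English description precedes it below -/
import Mathlib

section
/- Let n ≥ 21. Let H_n be a random variable on {1, …, n} with P[H_n = k] = 1/(L_n k), L_n = Σ_{j=1}^n 1/j, and for each prime p let α_p(k) denote the p-adic valuation of k (so that k = ∏_p p^{α_p(k)}). Let {ξ_p}_{p prime} be independent geometric random variables with P[ξ_p = k] = (1 − p⁻¹) p^{−k} for k ∈ ℕ₀, and let 𝒜_n be the event {∏_{p prime, p ≤ n} p^{ξ_p} ≤ n}. Then the law of the random vector (α_p(H_n) : p prime, p ≤ n) equals the conditional law of (ξ_p : p prime, p ≤ n) given 𝒜_n. -/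
/-!
Both sides are probability measures on vectors `a = (a_p)_{p ≤ n}` whose mass at `a` is
proportional to `1 / ∏ p ^ a_p` on the set `∏ p ^ a_p ≤ n` and vanishes off it. For `H_n` this
is because `a ↦ ∏ p ^ a_p` inverts the factorization map on `{1, …, n}`, so that
`P[α(H_n) = a] = P[H_n = ∏ p ^ a_p]`; for the conditioned `ξ` it is independence, which gives
`P[ξ = a] = ∏ (1 - p⁻¹) / ∏ p ^ a_p`. Two probability measures on a countable space with
proportional masses coincide.
-/

open MeasureTheory ProbabilityTheory Finset
open scoped ProbabilityTheory ENNReal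

/-- The set of primes `p ≤ n`, as a finset of `Nat.Primes`. -/
noncomputable def primesUpTo' (n : ℕ) : Finset Nat.Primes :=
  Finset.subtype Nat.Prime (Finset.range (n + 1))

section PrimePowProd

variable {P : Nat.Primes → Prop} [Fintype {p // P p}]

def primePowProd (a : {p // P p} → ℕ) : ℕ := ∏ p : {p // P p}, ((p : Nat.Primes) : ℕ) ^ a p

lemma primePowProd_ne_zero (a : {p // P p} → ℕ) : primePowProd a ≠ 0 :=
  Finset.prod_ne_zero_iff.2 fun p _ => pow_ne_zero _ p.1.2.ne_zero

lemma primePowProd_zero : primePowProd (0 : {p // P p} → ℕ) = 1 :=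
  Finset.prod_eq_one fun _ _ => pow_zero _

lemma factorization_primePowProd (a : {p // P p} → ℕ) (q : {p // P p}) :
    (primePowProd a).factorization (q : Nat.Primes) = a q := by
  classical
  rw [primePowProd, Nat.factorization_prod fun p _ => pow_ne_zero _ p.1.2.ne_zero,
    Finset.sum_apply', Finset.sum_eq_single q]
  · simp [q.1.2.factorization_pow]
  · intro p _ hpq
    rw [p.1.2.factorization_pow, Finsupp.single_eq_of_ne]
    exact fun h => hpq (Subtype.ext (Nat.Primes.coe_nat_injective h.symm))
  · simp

lemma primePowProd_factorization {m : ℕ} (hm : m ≠ 0)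
    (hP : ∀ p : Nat.Primes, (p : ℕ) ∣ m → P p) :
    primePowProd (fun p : {p // P p} => m.factorization p) = m := by
  classical
  let e : {p // P p} ↪ ℕ :=
    ⟨fun p => p.1, fun p q h => Subtype.ext (Nat.Primes.coe_nat_injective h)⟩
  have hsupp : m.factorization.support ⊆ Finset.univ.map e := by
    intro p hp
    rw [Nat.support_factorization] at hp
    exact Finset.mem_map.2 ⟨⟨⟨p, Nat.prime_of_mem_primeFactors hp⟩,
      hP _ (Nat.dvd_of_mem_primeFactors hp)⟩, Finset.mem_univ _, rfl⟩
  calc primePowProd (fun p : {p // P p} => m.factorization p)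
      = ∏ p ∈ Finset.univ.map e, p ^ m.factorization p := by rw [Finset.prod_map]; rfl
    _ = m.factorization.prod (· ^ ·) := (Finsupp.prod_of_support_subset _ hsupp _ (by simp)).symm
    _ = m := Nat.prod_factorization_pow_eq_self hm

lemma factorization_eq_iff_primePowProd_eq {m : ℕ} (hm : m ≠ 0)
    (hP : ∀ p : Nat.Primes, (p : ℕ) ∣ m → P p) (a : {p // P p} → ℕ) :
    (fun p : {p // P p} => m.factorization p) = a ↔ primePowProd a = m :=
  ⟨fun h => h ▸ primePowProd_factorization hm hP,
    fun h => h ▸ funext (factorization_primePowProd a)⟩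

end PrimePowProd

lemma mem_primesUpTo' {n : ℕ} {p : Nat.Primes} : p ∈ primesUpTo' n ↔ (p : ℕ) ≤ n :=
  Finset.mem_subtype.trans (Finset.mem_range.trans Nat.lt_succ_iff)

abbrev PrimesLE (n : ℕ) := {p : Nat.Primes // (p : ℕ) ≤ n}

noncomputable instance (n : ℕ) : Fintype (PrimesLE n) :=
  Fintype.subtype (primesUpTo' n) fun _ => mem_primesUpTo'

lemma prod_primesUpTo'_eq_primePowProd (n : ℕ) (a : Nat.Primes → ℕ) :
    ∏ p ∈ primesUpTo' n, (p : ℕ) ^ a p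
      = primePowProd (fun p : PrimesLE n => a p) :=
  Finset.prod_subtype _ (fun _ => mem_primesUpTo') _

lemma measure_inter_singleton_eq_indicator {α : Type*} [MeasurableSpace α] (μ : Measure α)
    (T : Set α) (a : α) : μ (T ∩ {a}) = T.indicator (fun x => μ {x}) a := by
  by_cases h : a ∈ T <;> simp [h]

theorem MeasureTheory.Measure.eq_of_singleton_proportional {α : Type*} [MeasurableSpace α]
    [Countable α] [MeasurableSingletonClass α] {μ ν : Measure α} [IsProbabilityMeasure μ]
    [IsProbabilityMeasure ν] {c d : ℝ≥0∞} (w : α → ℝ≥0∞) (hμ : ∀ a, μ {a} = c * w a)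
    (hν : ∀ a, ν {a} = d * w a) : μ = ν := by
  have const_eq_inv_tsum {ρ : Measure α} [IsProbabilityMeasure ρ] {e : ℝ≥0∞}
      (hρ : ∀ a, ρ {a} = e * w a) : e = (∑' a, w a)⁻¹ := by
    refine ENNReal.eq_inv_of_mul_eq_one_left ?_
    rw [← ENNReal.tsum_mul_left, ← measure_univ (μ := ρ),
      ← ρ.tsum_indicator_apply_singleton _ MeasurableSet.univ]
    simp [hρ]
  exact Measure.ext_iff_singleton.2 fun a => by
    rw [hμ, hν, const_eq_inv_tsum hμ, const_eq_inv_tsum hν]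

lemma map_cond_preimage {Ω β : Type*} [MeasurableSpace Ω] [MeasurableSpace β] {μ : Measure Ω}
    {Y : Ω → β} (hY : Measurable Y) {T : Set β} (hT : MeasurableSet T) :
    (μ[|Y ⁻¹' T]).map Y = (μ.map Y)[|T] := by
  ext s hs
  rw [Measure.map_apply hY hs, cond_apply (hY hT), cond_apply hT, Measure.map_apply hY hT,
    Measure.map_apply hY (hT.inter hs), Set.preimage_inter]

lemma cond_apply_singleton_of_eq_mul {α : Type*} [MeasurableSpace α] {ν : Measure α}
    {c : ℝ≥0∞} {f : α → ℝ≥0∞} (hν : ∀ a, ν {a} = c * f a) {T : Set α} (hT : MeasurableSet T)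
    (a : α) : ν[|T] {a} = (ν T)⁻¹ * c * T.indicator f a := by
  simp_rw [cond_apply hT, measure_inter_singleton_eq_indicator, hν, Set.indicator_mul_right,
    mul_assoc]

lemma ofReal_geometric_mass {p : ℕ} (hp : p ≠ 0) (k : ℕ) :
    ENNReal.ofReal ((1 - (p : ℝ)⁻¹) * ((p : ℝ)⁻¹) ^ k)
      = ENNReal.ofReal (1 - (p : ℝ)⁻¹) * ((p ^ k : ℕ) : ℝ≥0∞)⁻¹ := by
  rw [ENNReal.ofReal_mul' (by positivity), inv_pow, ← Nat.cast_pow,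
    ENNReal.ofReal_inv_of_pos (by positivity), ENNReal.ofReal_natCast]

lemma map_geometric_apply_singleton {Ω : Type*} [MeasurableSpace Ω] {μ : Measure Ω}
    [IsProbabilityMeasure μ] {P : Nat.Primes → Prop} [Fintype {p // P p}]
    {ξ : Nat.Primes → Ω → ℕ} (hξmeas : ∀ p, Measurable (ξ p))
    (hξ : ∀ (p : Nat.Primes) (k : ℕ), μ {ω | ξ p ω = k}
      = ENNReal.ofReal ((1 - ((p : ℕ) : ℝ)⁻¹) * (((p : ℕ) : ℝ)⁻¹) ^ k))
    (hindep : iIndepFun ξ μ) (a : {p // P p} → ℕ) :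
    μ.map (fun ω (p : {p // P p}) => ξ p ω) {a}
      = (∏ p : {p // P p}, ENNReal.ofReal (1 - (((p : Nat.Primes) : ℕ) : ℝ)⁻¹))
        * (primePowProd a : ℝ≥0∞)⁻¹ := by
  have hvec : iIndepFun (fun p : {p // P p} => ξ p) μ := hindep.precomp Subtype.val_injective
  rw [(iIndepFun_iff_map_fun_eq_pi_map fun p => (hξmeas _).aemeasurable).1 hvec,
    ← Set.univ_pi_singleton, Measure.pi_pi]
  simp_rw [Measure.map_apply (hξmeas _) (measurableSet_singleton _)]
  change ∏ p : {p // P p}, μ {ω | ξ p ω = a p} = _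
  rw [Finset.prod_congr rfl fun (p : {p // P p}) _ =>
      (hξ p.1 (a p)).trans (ofReal_geometric_mass p.1.2.ne_zero _),
    Finset.prod_mul_distrib, primePowProd, Nat.cast_prod,
    ENNReal.prod_inv_distrib fun _ _ _ _ _ => Or.inr (ENNReal.natCast_ne_top _)]

lemma map_geometric_apply_singleton_ne_zero {Ω : Type*} [MeasurableSpace Ω] {μ : Measure Ω}
    [IsProbabilityMeasure μ] {P : Nat.Primes → Prop} [Fintype {p // P p}]
    {ξ : Nat.Primes → Ω → ℕ} (hξmeas : ∀ p, Measurable (ξ p))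
    (hξ : ∀ (p : Nat.Primes) (k : ℕ), μ {ω | ξ p ω = k}
      = ENNReal.ofReal ((1 - ((p : ℕ) : ℝ)⁻¹) * (((p : ℕ) : ℝ)⁻¹) ^ k))
    (hindep : iIndepFun ξ μ) (a : {p // P p} → ℕ) :
    μ.map (fun ω (p : {p // P p}) => ξ p ω) {a} ≠ 0 := by
  rw [map_geometric_apply_singleton hξmeas hξ hindep]
  refine mul_ne_zero (Finset.prod_ne_zero_iff.2 fun p _ => (ENNReal.ofReal_pos.2 ?_).ne')
    (ENNReal.inv_ne_zero.2 (ENNReal.natCast_ne_top _))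
  exact sub_pos.2 (inv_lt_one_of_one_lt₀ (by exact_mod_cast p.1.2.one_lt))

lemma map_factorization_apply_singleton {μ : Measure ℕ} {n : ℕ} (hμ : μ (Set.Icc 1 n)ᶜ = 0)
    (a : PrimesLE n → ℕ) :
    μ.map (fun m (p : PrimesLE n) => m.factorization p) {a}
      = {a | primePowProd a ≤ n}.indicator (fun a => μ {primePowProd a}) a := by
  rw [Measure.map_apply (measurable_of_countable _) (measurableSet_singleton a),
    ← measure_inter_conull hμ]
  have : (fun m (p : PrimesLE n) => m.factorization p) ⁻¹' {a}
      ∩ Set.Icc 1 n = {primePowProd a} ∩ Set.Icc 1 n := by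
    ext m
    simp only [Set.mem_inter_iff, Set.mem_preimage, Set.mem_singleton_iff]
    refine and_congr_left fun hm => (factorization_eq_iff_primePowProd_eq ?_ ?_ a).trans eq_comm
    · exact Nat.one_le_iff_ne_zero.1 hm.1
    · exact fun p hp => (Nat.le_of_dvd hm.1 hp).trans hm.2
  rw [this, Set.inter_comm, measure_inter_singleton_eq_indicator]
  simp [Set.indicator_apply, Nat.one_le_iff_ne_zero, primePowProd_ne_zero]

lemma ofReal_one_div_mul_natCast (L : ℝ) {k : ℕ} (hk : k ≠ 0) :
    ENNReal.ofReal (1 / (L * k)) = ENNReal.ofReal L⁻¹ * (k : ℝ≥0∞)⁻¹ := by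
  rw [one_div, mul_inv, ENNReal.ofReal_mul' (inv_nonneg.2 k.cast_nonneg),
    ENNReal.ofReal_inv_of_pos (x := k) (by positivity), ENNReal.ofReal_natCast]

lemma map_factorization_apply_singleton_of_harmonic {Ω : Type*} [MeasurableSpace Ω]
    {μ : Measure Ω} {n : ℕ} {L : ℝ} {H : Ω → ℕ} (hHmeas : Measurable H)
    (hH : ∀ k : ℕ, μ {ω | H ω = k}
      = if k ∈ Finset.Icc 1 n then ENNReal.ofReal (1 / (L * k)) else 0)
    (a : PrimesLE n → ℕ) :
    μ.map (fun ω (p : PrimesLE n) => (H ω).factorization p) {a}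
      = ENNReal.ofReal L⁻¹
        * {a | primePowProd a ≤ n}.indicator (fun a => (primePowProd a : ℝ≥0∞)⁻¹) a := by
  have hsupp : μ.map H (Set.Icc 1 n)ᶜ = 0 :=
    (measure_null_iff_singleton (Set.to_countable _)).2 fun k hk => by
      rw [Measure.map_apply hHmeas (measurableSet_singleton k)]
      exact (hH k).trans (if_neg (by simpa using hk))
  have hX : (fun ω (p : PrimesLE n) => (H ω).factorization p)
      = (fun (m : ℕ) (p : PrimesLE n) => m.factorization p) ∘ H := rfl
  rw [hX, ← Measure.map_map (measurable_of_countable _) hHmeas,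
    map_factorization_apply_singleton hsupp]
  refine (congrFun (Set.indicator_congr fun b (hb : primePowProd b ≤ n) => ?_) a).trans
    (Set.indicator_mul_right _ (fun _ => ENNReal.ofReal L⁻¹) _)
  have hb₀ := primePowProd_ne_zero b
  rw [Measure.map_apply hHmeas (measurableSet_singleton _)]
  exact (hH _).trans (by rw [if_pos (Finset.mem_Icc.2 ⟨Nat.one_le_iff_ne_zero.2 hb₀, hb⟩),
    ofReal_one_div_mul_natCast L hb₀])

theorem conditioned_independence_multiplicities_general
    {Ω : Type*} [MeasureSpace Ω] [IsProbabilityMeasure (ℙ : Measure Ω)]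
    (n : ℕ) (hn : 21 ≤ n)
    (L : ℝ)
    -- `H` has harmonic distribution on `{1, …, n}`
    (H : Ω → ℕ) (hHmeas : Measurable H)
    (hH : ∀ k : ℕ, ℙ {ω | H ω = k}
      = if k ∈ Finset.Icc 1 n then ENNReal.ofReal (1 / (L * k)) else 0)
    -- `{ξ_p}` is an independent family of geometric random variables
    (ξ : Nat.Primes → Ω → ℕ) (hξmeas : ∀ p, Measurable (ξ p))
    (hξ : ∀ (p : Nat.Primes) (k : ℕ), ℙ {ω | ξ p ω = k}
      = ENNReal.ofReal ((1 - ((p : ℕ) : ℝ)⁻¹) * (((p : ℕ) : ℝ)⁻¹) ^ k))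
    (hindep : iIndepFun ξ ℙ) :
    Measure.map (fun ω => fun p : {p : Nat.Primes // (p : ℕ) ≤ n} =>
        (H ω).factorization ((p : Nat.Primes) : ℕ)) ℙ
      = Measure.map (fun ω => fun p : {p : Nat.Primes // (p : ℕ) ≤ n} =>
          ξ (p : Nat.Primes) ω)
          (ℙ[|{ω | ∏ p ∈ primesUpTo' n, (p : ℕ) ^ ξ p ω ≤ n}]) := by
  set Y := fun ω (p : PrimesLE n) => ξ p ω
  set T := {a : PrimesLE n → ℕ | primePowProd a ≤ n}
  have hT : MeasurableSet T := .of_discrete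
  have hYmeas : Measurable Y := measurable_pi_lambda _ fun p => hξmeas p
  have hXmeas : Measurable fun ω (p : PrimesLE n) => (H ω).factorization p :=
    (measurable_of_countable fun (m : ℕ) (p : PrimesLE n) => m.factorization p).comp hHmeas
  have hA : {ω | ∏ p ∈ primesUpTo' n, (p : ℕ) ^ ξ p ω ≤ n} = Y ⁻¹' T := by
    ext ω
    simp only [prod_primesUpTo'_eq_primePowProd]
    rfl
  have h0 : (0 : PrimesLE n → ℕ) ∈ T := show primePowProd 0 ≤ n by
    rw [primePowProd_zero]
    omega
  have hYT : Measure.map Y ℙ T ≠ 0 := (measure_pos_of_superset (Set.singleton_subset_iff.2 h0)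
    (map_geometric_apply_singleton_ne_zero hξmeas hξ hindep 0)).ne'
  have := cond_isProbabilityMeasure hYT
  have := Measure.isProbabilityMeasure_map (μ := (ℙ : Measure Ω)) hXmeas.aemeasurable
  rw [hA, map_cond_preimage hYmeas hT]
  exact Measure.eq_of_singleton_proportional _
    (map_factorization_apply_singleton_of_harmonic hHmeas hH)
    (cond_apply_singleton_of_eq_mul (map_geometric_apply_singleton hξmeas hξ hindep) hT)

/-- **Theorem 3.6, eq. (3.18): conditioned independence of the prime multiplicities of `H_n`**:
the law of the vector `(α_p(H_n) : p prime, p ≤ n)` of `p`-adic valuations of `H_n` equals the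
law of the independent geometric vector `(ξ_p : p prime, p ≤ n)` conditioned on the event
`𝒜_n = {∏_{p ≤ n} p^{ξ_p} ≤ n}`. -/
theorem conditioned_independence_multiplicities
    {Ω : Type*} [MeasureSpace Ω] [IsProbabilityMeasure (ℙ : Measure Ω)]
    (n : ℕ) (hn : 21 ≤ n)
    (L : ℝ) (hL : L = ∑ j ∈ Finset.Icc 1 n, (1 : ℝ) / j)
    -- `H` has harmonic distribution on `{1, …, n}`
    (H : Ω → ℕ) (hHmeas : Measurable H)
    (hH : ∀ k : ℕ, ℙ {ω | H ω = k}
      = if k ∈ Finset.Icc 1 n then ENNReal.ofReal (1 / (L * k)) else 0)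
    -- `{ξ_p}` is an independent family of geometric random variables
    (ξ : Nat.Primes → Ω → ℕ) (hξmeas : ∀ p, Measurable (ξ p))
    (hξ : ∀ (p : Nat.Primes) (k : ℕ), ℙ {ω | ξ p ω = k}
      = ENNReal.ofReal ((1 - ((p : ℕ) : ℝ)⁻¹) * (((p : ℕ) : ℝ)⁻¹) ^ k))
    (hindep : iIndepFun ξ ℙ) :
    Measure.map (fun ω => fun p : {p : Nat.Primes // (p : ℕ) ≤ n} =>
        (H ω).factorization ((p : Nat.Primes) : ℕ)) ℙ
      = Measure.map (fun ω => fun p : {p : Nat.Primes // (p : ℕ) ≤ n} =>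
          ξ (p : Nat.Primes) ω)
          (ℙ[|{ω | ∏ p ∈ primesUpTo' n, (p : ℕ) ^ ξ p ω ≤ n}]) :=
  conditioned_independence_multiplicities_general n hn L H hHmeas hH ξ hξmeas hξ hindep
end

section
/- Let n ≥ 21 and let ψ : ℕ → ℝ be an additive arithmetic function (ψ(jk) = ψ(j) + ψ(k) whenever j and k are coprime). Let H_n be a random variable on {1, …, n} with P[H_n = k] = 1/(L_n k), L_n = Σ_{j=1}^n 1/j. Let {ξ_p}_{p prime} be independent geometric random variables with P[ξ_p = k] = (1 − p⁻¹) p^{−k} for k ∈ ℕ₀, and let 𝒜_n be the event {∏_{p prime, p ≤ n} p^{ξ_p} ≤ n}. Then the law of ψ(H_n) equals the conditional law of Σ_{p prime, p ≤ n} ψ(p^{ξ_p}) given 𝒜_n. -/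
/-!
Write `X = ∏_{p ≤ n} p^{ξ_p}`. By unique factorization, `X = m` for `1 ≤ m ≤ n` exactly when
`ξ_p = v_p(m)` for every `p ≤ n`, so by independence `P[X = m] = C / m` with
`C = ∏_{p ≤ n} (1 - p⁻¹)`. Conditioning on `X ≤ n` normalizes these weights into the harmonic law
of `H_n`, and additivity of `ψ` gives `ψ(X) = Σ_{p ≤ n} ψ(p^{ξ_p})`.
-/

open MeasureTheory ProbabilityTheory Finset
open scoped ProbabilityTheory ENNReal

section Additive

variable {M : Type*} [AddCommGroup M] {ψ : ℕ → M}

lemma additive_map_one (hadd : ∀ j k : ℕ, Nat.Coprime j k → ψ (j * k) = ψ j + ψ k) :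
    ψ 1 = 0 := by
  have h := hadd 1 1 (Nat.coprime_one_left 1)
  rwa [mul_one, left_eq_add] at h

lemma additive_map_prod_prime_pow (hadd : ∀ j k : ℕ, Nat.Coprime j k → ψ (j * k) = ψ j + ψ k)
    (s : Finset Nat.Primes) (e : Nat.Primes → ℕ) :
    ψ (∏ p ∈ s, (p : ℕ) ^ e p) = ∑ p ∈ s, ψ ((p : ℕ) ^ e p) := by
  induction s using Finset.cons_induction with
  | empty => simpa using additive_map_one hadd
  | cons p s hp ih =>
    rw [prod_cons, sum_cons, hadd, ih]
    refine Nat.Coprime.prod_right fun q hq => Nat.Coprime.pow _ _ ?_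
    exact (Nat.coprime_primes p.prop q.prop).mpr fun h => hp (Subtype.ext h ▸ hq)

end Additive

lemma factorization_prod_primes_pow {s : Finset Nat.Primes} (e : Nat.Primes → ℕ)
    {p : Nat.Primes} (hp : p ∈ s) :
    (∏ q ∈ s, (q : ℕ) ^ e q).factorization p = e p := by
  rw [Nat.factorization_prod fun q _ => pow_ne_zero _ q.prop.ne_zero, sum_apply']
  have hterm : ∀ q ∈ s, ((q : ℕ) ^ e q).factorization p = if q = p then e q else 0 := by
    intro q _
    rw [q.prop.factorization_pow, Finsupp.single_apply]
    simp only [Nat.Primes.coe_nat_inj]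
  rw [sum_congr rfl hterm, sum_ite_eq' _ p e, if_pos hp]

lemma prod_primes_pow_factorization_eq_self {m : ℕ} (hm : m ≠ 0) {s : Finset Nat.Primes}
    (hs : ∀ p : Nat.Primes, (p : ℕ) ∣ m → p ∈ s) :
    ∏ p ∈ s, (p : ℕ) ^ m.factorization p = m := by
  let coe : Nat.Primes ↪ ℕ := ⟨(↑), Nat.Primes.coe_nat_injective⟩
  have hsub : m.primeFactors ⊆ s.map coe := fun q hq =>
    mem_map.mpr ⟨⟨q, Nat.prime_of_mem_primeFactors hq⟩, hs _ (Nat.dvd_of_mem_primeFactors hq),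
      rfl⟩
  have hprod : ∏ p ∈ s, (p : ℕ) ^ m.factorization p = ∏ q ∈ s.map coe, q ^ m.factorization q :=
    (prod_map s coe fun q => q ^ m.factorization q).symm
  rw [hprod, ← prod_subset hsub fun q _ hq => by
    rw [Finsupp.notMem_support_iff.mp (by rwa [Nat.support_factorization]), pow_zero]]
  exact (Nat.prod_primeFactors_pow_factorization hm).symm

lemma prod_primes_pow_eq_iff {m : ℕ} (hm : m ≠ 0) {s : Finset Nat.Primes}
    (hs : ∀ p : Nat.Primes, (p : ℕ) ∣ m → p ∈ s) (e : Nat.Primes → ℕ) :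
    ∏ p ∈ s, (p : ℕ) ^ e p = m ↔ ∀ p ∈ s, e p = m.factorization p := by
  constructor
  · rintro rfl p hp
    exact (factorization_prod_primes_pow e hp).symm
  · intro he
    rw [prod_congr rfl fun p hp => by rw [he p hp]]
    exact prod_primes_pow_factorization_eq_self hm hs

lemma one_sub_inv_prime_pos (p : Nat.Primes) : 0 < 1 - ((p : ℕ) : ℝ)⁻¹ := by
  have hp : (1 : ℝ) < (p : ℕ) := by exact_mod_cast p.prop.one_lt
  linarith [inv_lt_one_of_one_lt₀ hp]

lemma measure_forall_eq_of_iIndepFun_geometric {Ω : Type*} [MeasurableSpace Ω] {μ : Measure Ω}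
    {ξ : Nat.Primes → Ω → ℕ}
    (hξ : ∀ (p : Nat.Primes) (k : ℕ), μ {ω | ξ p ω = k}
      = ENNReal.ofReal ((1 - ((p : ℕ) : ℝ)⁻¹) * (((p : ℕ) : ℝ)⁻¹) ^ k))
    (hindep : iIndepFun ξ μ) (s : Finset Nat.Primes) (e : Nat.Primes → ℕ) :
    μ {ω | ∀ p ∈ s, ξ p ω = e p}
      = ENNReal.ofReal ((∏ p ∈ s, (1 - ((p : ℕ) : ℝ)⁻¹)) / ((∏ p ∈ s, (p : ℕ) ^ e p : ℕ) : ℝ)) := by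
  have hinter : {ω | ∀ p ∈ s, ξ p ω = e p} = ⋂ p ∈ s, {ω | ξ p ω = e p} := by
    ext ω
    simp
  rw [hinter, hindep.meas_biInter (s := fun p => {ω | ξ p ω = e p})
    fun p _ => ⟨{e p}, measurableSet_singleton _, rfl⟩]
  rw [prod_congr rfl fun p _ => hξ p (e p), ← ENNReal.ofReal_prod_of_nonneg fun p _ =>
    mul_nonneg (one_sub_inv_prime_pos p).le (by positivity)]
  push_cast
  rw [div_eq_mul_inv, ← prod_inv_distrib, ← prod_mul_distrib]
  simp only [inv_pow]

lemma measure_prod_primes_pow_eq_of_iIndepFun_geometric {Ω : Type*} [MeasurableSpace Ω]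
    {μ : Measure Ω} {ξ : Nat.Primes → Ω → ℕ}
    (hξ : ∀ (p : Nat.Primes) (k : ℕ), μ {ω | ξ p ω = k}
      = ENNReal.ofReal ((1 - ((p : ℕ) : ℝ)⁻¹) * (((p : ℕ) : ℝ)⁻¹) ^ k))
    (hindep : iIndepFun ξ μ) {s : Finset Nat.Primes} {m : ℕ} (hm : m ≠ 0)
    (hs : ∀ p : Nat.Primes, (p : ℕ) ∣ m → p ∈ s) :
    μ {ω | ∏ p ∈ s, (p : ℕ) ^ ξ p ω = m}
      = ENNReal.ofReal ((∏ p ∈ s, (1 - ((p : ℕ) : ℝ)⁻¹)) / m) := by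
  have hfiber : {ω | ∏ p ∈ s, (p : ℕ) ^ ξ p ω = m} = {ω | ∀ p ∈ s, ξ p ω = m.factorization p} :=
    Set.ext fun ω => prod_primes_pow_eq_iff hm hs fun p => ξ p ω
  rw [hfiber, measure_forall_eq_of_iIndepFun_geometric hξ hindep,
    prod_primes_pow_factorization_eq_self hm hs]

lemma map_eq_map_cond_of_measure_preimage_eq_mul {Ω α : Type*} [MeasurableSpace Ω]
    [MeasurableSpace α] [MeasurableSingletonClass α] [Countable α] [DecidableEq α] {μ : Measure Ω}
    {H X : Ω → α} (hHmeas : Measurable H) (hXmeas : Measurable X) (S : Finset α) (w : α → ℝ)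
    (hw : ∀ a ∈ S, 0 < w a) {c : ℝ} (hc : 0 < c)
    (hX : ∀ a ∈ S, μ (X ⁻¹' {a}) = ENNReal.ofReal (c * w a))
    (hH : ∀ a, μ (H ⁻¹' {a}) = if a ∈ S then ENNReal.ofReal (w a / ∑ b ∈ S, w b) else 0) :
    μ.map H = (μ[|X ⁻¹' S]).map X := by
  have hXS : μ (X ⁻¹' S) = ENNReal.ofReal (c * ∑ a ∈ S, w a) := by
    rw [← sum_measure_preimage_singleton S fun a _ => hXmeas (measurableSet_singleton a),
      sum_congr rfl hX, ← ENNReal.ofReal_sum_of_nonneg fun a ha => (mul_pos hc (hw a ha)).le,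
      mul_sum]
  refine Measure.ext_iff_singleton.mpr fun a => ?_
  rw [Measure.map_apply hHmeas (measurableSet_singleton a),
    Measure.map_apply hXmeas (measurableSet_singleton a), cond_apply (hXmeas S.measurableSet), hH]
  by_cases ha : a ∈ S
  · have hwS : 0 < ∑ b ∈ S, w b := sum_pos hw ⟨a, ha⟩
    rw [Set.inter_eq_self_of_subset_right (Set.preimage_mono (Set.singleton_subset_iff.mpr ha)),
      hX a ha, hXS, if_pos ha, ← ENNReal.ofReal_inv_of_pos (by positivity),
      ← ENNReal.ofReal_mul (by positivity)]
    congr 1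
    field_simp
  · rw [← Set.preimage_inter, Set.inter_singleton_eq_empty.mpr ha, Set.preimage_empty,
      measure_empty, mul_zero, if_neg ha]

theorem conditioned_independence_additive_general
    {Ω : Type*} [MeasureSpace Ω]
    (n : ℕ)
    (ψ : ℕ → ℝ)
    (hadd : ∀ j k : ℕ, Nat.Coprime j k → ψ (j * k) = ψ j + ψ k)
    (L : ℝ) (hL : L = ∑ j ∈ Finset.Icc 1 n, (1 : ℝ) / j)
    -- `H` has harmonic distribution on `{1, …, n}`
    (H : Ω → ℕ) (hHmeas : Measurable H)
    (hH : ∀ k : ℕ, ℙ {ω | H ω = k}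
      = if k ∈ Finset.Icc 1 n then ENNReal.ofReal (1 / (L * k)) else 0)
    -- `{ξ_p}` is an independent family of geometric random variables
    (ξ : Nat.Primes → Ω → ℕ) (hξmeas : ∀ p, Measurable (ξ p))
    (hξ : ∀ (p : Nat.Primes) (k : ℕ), ℙ {ω | ξ p ω = k}
      = ENNReal.ofReal ((1 - ((p : ℕ) : ℝ)⁻¹) * (((p : ℕ) : ℝ)⁻¹) ^ k))
    (hindep : iIndepFun ξ ℙ) :
    Measure.map (fun ω => ψ (H ω)) ℙ
      = Measure.map (fun ω => ∑ p ∈ primesUpTo' n, ψ ((p : ℕ) ^ ξ p ω))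
          (ℙ[|{ω | ∏ p ∈ primesUpTo' n, (p : ℕ) ^ ξ p ω ≤ n}]) := by
  set X : Ω → ℕ := fun ω => ∏ p ∈ primesUpTo' n, (p : ℕ) ^ ξ p ω
  have hXmeas : Measurable X :=
    Finset.measurable_prod _ fun p _ => Measurable.of_discrete.comp (hξmeas p)
  have hX : ∀ m ∈ Icc 1 n, ℙ (X ⁻¹' {m})
      = ENNReal.ofReal ((∏ p ∈ primesUpTo' n, (1 - ((p : ℕ) : ℝ)⁻¹)) * (1 / m)) := by
    intro m hm
    obtain ⟨hm1, hmn⟩ := mem_Icc.mp hm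
    rw [mul_one_div]
    exact measure_prod_primes_pow_eq_of_iIndepFun_geometric hξ hindep (by omega) fun p hp =>
      mem_primesUpTo'.mpr ((Nat.le_of_dvd hm1 hp).trans hmn)
  have hevent : {ω | X ω ≤ n} = X ⁻¹' Icc 1 n := by
    ext ω
    have hX1 : 1 ≤ X ω := prod_pos fun (p : Nat.Primes) _ => pow_pos p.prop.pos _
    simp [hX1]
  have hlaw : Measure.map H ℙ = (ℙ[|X ⁻¹' Icc 1 n]).map X := by
    refine map_eq_map_cond_of_measure_preimage_eq_mul hHmeas hXmeas (Icc 1 n) (fun k => 1 / k)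
      (fun k hk => by have := (mem_Icc.mp hk).1; positivity)
      (prod_pos fun p _ => one_sub_inv_prime_pos p) hX fun k => ?_
    rw [← hL, div_div, mul_comm]
    exact hH k
  have hsum : (fun ω => ∑ p ∈ primesUpTo' n, ψ ((p : ℕ) ^ ξ p ω)) = ψ ∘ X :=
    funext fun ω => (additive_map_prod_prime_pow hadd _ _).symm
  have hψ : Measurable ψ := Measurable.of_discrete
  rw [hsum, hevent, ← Function.comp_def ψ H, ← Measure.map_map hψ hHmeas, hlaw,
    Measure.map_map hψ hXmeas]

/-- **Theorem 3.6, eq. (3.19)**: for an additive function `ψ`, the law of `ψ(H_n)` equals the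
law of `Σ_{p ≤ n} ψ(p^{ξ_p})` conditioned on the event `𝒜_n = {∏_{p ≤ n} p^{ξ_p} ≤ n}`. -/
theorem conditioned_independence_additive
    {Ω : Type*} [MeasureSpace Ω] [IsProbabilityMeasure (ℙ : Measure Ω)]
    (n : ℕ) (hn : 21 ≤ n)
    (ψ : ℕ → ℝ)
    (hadd : ∀ j k : ℕ, Nat.Coprime j k → ψ (j * k) = ψ j + ψ k)
    (L : ℝ) (hL : L = ∑ j ∈ Finset.Icc 1 n, (1 : ℝ) / j)
    -- `H` has harmonic distribution on `{1, …, n}`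
    (H : Ω → ℕ) (hHmeas : Measurable H)
    (hH : ∀ k : ℕ, ℙ {ω | H ω = k}
      = if k ∈ Finset.Icc 1 n then ENNReal.ofReal (1 / (L * k)) else 0)
    -- `{ξ_p}` is an independent family of geometric random variables
    (ξ : Nat.Primes → Ω → ℕ) (hξmeas : ∀ p, Measurable (ξ p))
    (hξ : ∀ (p : Nat.Primes) (k : ℕ), ℙ {ω | ξ p ω = k}
      = ENNReal.ofReal ((1 - ((p : ℕ) : ℝ)⁻¹) * (((p : ℕ) : ℝ)⁻¹) ^ k))
    (hindep : iIndepFun ξ ℙ) :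
    Measure.map (fun ω => ψ (H ω)) ℙ
      = Measure.map (fun ω => ∑ p ∈ primesUpTo' n, ψ ((p : ℕ) ^ ξ p ω))
          (ℙ[|{ω | ∏ p ∈ primesUpTo' n, (p : ℕ) ^ ξ p ω ≤ n}]) :=
  conditioned_independence_additive_general n ψ hadd L hL H hHmeas hH ξ hξmeas hξ hindep
end

section
/- Let n ≥ 21. Let H_n be a random variable on {1, …, n} with P[H_n = k] = 1/(L_n k), L_n = Σ_{j=1}^n 1/j, and let {Q(k)}_{k ≥ 1} be random variables, independent of H_n, such that Q(k) is uniformly distributed on {1} ∪ {p prime : p ≤ k}. Then P[Q(⌊n/H_n⌋) divides H_n] ≤ 6.4 · log(log n)/log n. -/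
open MeasureTheory ProbabilityTheory Finset
open scoped ProbabilityTheory ENNReal

/-- The set of primes `p ≤ n`, as a finset. -/
noncomputable def primesUpTo (n : ℕ) : Finset ℕ := (Finset.range (n + 1)).filter Nat.Prime

/-!
Conditioned on `H_n = k`, the event asks `Q(⌊n/k⌋)` to hit one of the elements of
`{1} ∪ {primes}` dividing `k`; there are at most `ω(k) + 1 ≤ log k / log 2 + 1` of them, so the
conditional probability is at most `(ω(k) + 1) / (π(⌊n/k⌋) + 1)`, and always at most `1`.
With `T = ⌊(log n)³⌋`, Chebyshev's bound `m log 2 ≤ (π(m) + 1) log (m + 1)` makes this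
`O(1 / log n)` for `k ≤ n / T`, while the `k > n / T` carry harmonic mass at most
`(1 + log T) / L_n ≤ (1 + 3 log log n) / log n`. When `log log n ≤ 2` the trivial bound `1` suffices.
-/

open Real

lemma card_primesUpTo (m : ℕ) : #(primesUpTo m) = Nat.primeCounting m :=
  Nat.primesLE_card_eq_primeCounting m

lemma natCast_mul_log_two_le_primeCounting_add_one_mul_log (m : ℕ) :
    m * log 2 ≤ (Nat.primeCounting m + 1) * log (m + 1) := by
  have hψ_ge := Chebyshev.psi_ge m
  have hψ_le := Chebyshev.psi_le_primeCounting_mul_log m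
  have hlog : log m ≤ log (m + 1) := by
    rcases m.eq_zero_or_pos with rfl | hm
    · simp
    · exact log_le_log (by positivity) (by linarith)
  nlinarith [mul_le_mul_of_nonneg_left hlog (Nat.cast_nonneg (α := ℝ) (Nat.primeCounting m))]

lemma card_primeFactors_mul_log_two_le_log (k : ℕ) : #k.primeFactors * log 2 ≤ log k := by
  rcases k.eq_zero_or_pos with rfl | hk
  · simp
  have h : 2 ^ #k.primeFactors ≤ k :=
    (pow_card_le_prod _ _ _ fun p hp => (Nat.prime_of_mem_primeFactors hp).two_le).trans
      (Nat.le_of_dvd hk (Nat.prod_primeFactors_dvd k))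
  rw [← log_pow]
  exact log_le_log (by positivity) (by exact_mod_cast h)

lemma divisors_inter_insert_one_subset (k : ℕ) (s : Finset ℕ) (hs : ∀ p ∈ s, p.Prime) :
    k.divisors ∩ insert 1 s ⊆ insert 1 k.primeFactors := by
  intro j hj
  simp only [mem_inter, Nat.mem_divisors, mem_insert] at hj ⊢
  obtain ⟨⟨hjk, hk⟩, rfl | hjs⟩ := hj
  · exact Or.inl rfl
  · exact Or.inr (Nat.mem_primeFactors.2 ⟨hs j hjs, hjk, hk⟩)

/-- `P[Q(m) ∣ k]` for `k ≠ 0`. -/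
noncomputable def probQDvd (m k : ℕ) : ℝ :=
  #(k.divisors ∩ insert 1 (primesUpTo m)) / (#(primesUpTo m) + 1)

lemma probQDvd_nonneg (m k : ℕ) : 0 ≤ probQDvd m k := by
  unfold probQDvd
  positivity

lemma probQDvd_le_one (m k : ℕ) : probQDvd m k ≤ 1 := by
  rw [probQDvd, div_le_one (by positivity)]
  exact_mod_cast (card_le_card inter_subset_right).trans (card_insert_le _ _)

lemma probQDvd_le (k : ℕ) {m : ℕ} (hm : 0 < m) :
    probQDvd m k ≤ (log k / log 2 + 1) * log (m + 1) / (m * log 2) := by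
  have hl : 0 < log 2 := log_pos one_lt_two
  have hcard : (#(k.divisors ∩ insert 1 (primesUpTo m)) : ℝ) ≤ log k / log 2 + 1 := by
    have hsub := card_le_card (divisors_inter_insert_one_subset k (primesUpTo m)
      fun p hp => (mem_filter.1 hp).2)
    have hω := (le_div_iff₀ hl).2 (card_primeFactors_mul_log_two_le_log k)
    have : (#(k.divisors ∩ insert 1 (primesUpTo m)) : ℝ) ≤ #k.primeFactors + 1 := by
      exact_mod_cast hsub.trans (card_insert_le _ _)
    linarith
  have hcheb := natCast_mul_log_two_le_primeCounting_add_one_mul_log m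
  rw [← card_primesUpTo] at hcheb
  have hk : 0 ≤ log k / log 2 + 1 := by
    have := log_natCast_nonneg k
    positivity
  rw [probQDvd, div_le_div_iff₀ (by positivity) (by positivity)]
  calc _ ≤ (log k / log 2 + 1) * (m * log 2) := by gcongr
    _ ≤ (log k / log 2 + 1) * ((#(primesUpTo m) + 1) * log (m + 1)) := by gcongr
    _ = _ := by ring

lemma probQDvd_div_le_of_mem_Icc {n T k : ℕ} (hT : 0 < T) (hk : k ∈ Icc 1 (n / T)) :
    probQDvd (n / k) k ≤ (log n / log 2 + 1) * (log n + log 2) / (T * log 2) := by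
  obtain ⟨hk1, hkT⟩ := mem_Icc.1 hk
  have hkT' : k * T ≤ n := (Nat.le_div_iff_mul_le hT).1 hkT
  have hTm : T ≤ n / k := (Nat.le_div_iff_mul_le hk1).2 (by rw [mul_comm]; exact hkT')
  have hkn : k ≤ n := (Nat.le_mul_of_pos_right k hT).trans hkT'
  have hn : n ≠ 0 := by omega
  have hmn : n / k + 1 ≤ n * 2 := by
    have := Nat.div_le_self n k
    omega
  refine (probQDvd_le k (hT.trans_le hTm)).trans ?_
  have hl : 0 < log 2 := log_pos one_lt_two
  gcongr ?_ * ?_ / ?_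
  · exact log_nonneg (by linarith)
  · gcongr
  · rw [← log_mul (by exact_mod_cast hn) two_ne_zero]
    exact log_le_log (by positivity) (by exact_mod_cast hmn)
  · gcongr

lemma harmonic_eq_sum_Ioc_inv (n : ℕ) : (harmonic n : ℝ) = ∑ k ∈ Ioc 0 n, (k : ℝ)⁻¹ := by
  rw [harmonic_eq_sum_Icc, ← Icc_add_one_left_eq_Ioc]
  push_cast
  rfl

lemma sum_inv_Ioc_div_le_one_add_log (n T : ℕ) (hT : 0 < T) :
    ∑ k ∈ Ioc (n / T) n, (k : ℝ)⁻¹ ≤ 1 + log T := by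
  rcases n.eq_zero_or_pos with rfl | hn
  · simpa using add_nonneg zero_le_one (log_natCast_nonneg T)
  have hsplit := sum_Ioc_consecutive (fun k : ℕ => (k : ℝ)⁻¹) (Nat.zero_le (n / T))
    (Nat.div_le_self n T)
  rw [← harmonic_eq_sum_Ioc_inv, ← harmonic_eq_sum_Ioc_inv] at hsplit
  have hupper := harmonic_le_one_add_log n
  have hlower := log_add_one_le_harmonic (n / T)
  have hlog_n : log n ≤ log T + log ((n / T : ℕ) + 1 : ℕ) := by
    rw [← log_mul (by positivity) (by positivity)]
    exact log_le_log (by positivity) (by exact_mod_cast (Nat.lt_mul_div_succ n hT).le)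
  linarith

lemma sum_div_natCast_le_of_le_on_Icc (n T : ℕ) (hT : 0 < T) {r : ℕ → ℝ} {c : ℝ} (hc : 0 ≤ c)
    (hr_one : ∀ k, r k ≤ 1) (hr_c : ∀ k ∈ Icc 1 (n / T), r k ≤ c) :
    ∑ k ∈ Icc 1 n, r k / k ≤ c * harmonic n + (1 + log T) := by
  rw [show Icc 1 n = Ioc 0 n from Icc_add_one_left_eq_Ioc 0 n,
    ← sum_Ioc_consecutive _ (Nat.zero_le (n / T)) (Nat.div_le_self n T)]
  gcongr ?_ + ?_
  · calc ∑ k ∈ Ioc 0 (n / T), r k / k ≤ ∑ k ∈ Ioc 0 (n / T), c * (k : ℝ)⁻¹ := by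
          gcongr with k hk
          rw [div_eq_mul_inv]
          gcongr
          exact hr_c k (by rwa [← Icc_add_one_left_eq_Ioc] at hk)
      _ ≤ c * harmonic n := by
          rw [← mul_sum, harmonic_eq_sum_Ioc_inv]
          gcongr
          exact Nat.div_le_self n T
  · calc ∑ k ∈ Ioc (n / T) n, r k / k ≤ ∑ k ∈ Ioc (n / T) n, (k : ℝ)⁻¹ := by
          gcongr with k hk
          rw [div_eq_mul_inv]
          exact mul_le_of_le_one_left (by positivity) (hr_one k)
      _ ≤ 1 + log T := sum_inv_Ioc_div_le_one_add_log n T hT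

lemma self_le_mul_log_of_log_le_two {A : ℝ} (hA : exp 1 ≤ A) (hlog : log A ≤ 2) :
    A ≤ 6.4 * log A := by
  have he := exp_one_lt_d9
  have he' := exp_one_gt_d9
  have hA0 : 0 < A := (exp_pos 1).trans_le hA
  have hA_le : A ≤ 7.3891 := by
    have : A ≤ exp 1 * exp 1 := by
      rw [← exp_add, ← exp_log hA0]
      exact exp_le_exp.2 (by linarith)
    nlinarith
  have hlog_ge : 2 * A - exp 1 ≤ A * log A := by
    have := one_sub_inv_le_log_of_pos (div_pos hA0 (exp_pos 1))
    rw [log_div hA0.ne' (exp_pos 1).ne', log_exp, inv_div] at this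
    have := mul_le_mul_of_nonneg_left this hA0.le
    rw [mul_sub, mul_sub, mul_div_cancel₀ _ hA0.ne'] at this
    linarith
  have hsq : A * A ≤ A * (6.4 * log A) := by
    nlinarith [mul_nonneg (sub_nonneg.2 hA) (sub_nonneg.2 hA_le)]
  exact le_of_mul_le_mul_left hsq hA0

lemma head_bound_le_three_div {A T : ℝ} (hA : 7 ≤ A) (hT : A ^ 3 - 1 ≤ T) :
    (A / log 2 + 1) * (A + log 2) / (T * log 2) ≤ 3 / A := by
  have hl := log_two_gt_d9
  have hl' := log_two_lt_d9
  have hl0 : 0 < log 2 := by linarith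
  have hpoly : (A + 0.6932) ^ 2 * A ≤ 1.44 * (A ^ 3 - 1) := by
    nlinarith [mul_nonneg (sub_nonneg.2 hA) (sq_nonneg A),
      mul_nonneg (sub_nonneg.2 hA) (sub_nonneg.2 hA)]
  have hT0 : 0 < T := by nlinarith
  have hl2 : 0.48 ≤ log 2 ^ 2 := by nlinarith
  have hl2T : 1.44 * (A ^ 3 - 1) ≤ 3 * log 2 ^ 2 * T := by
    nlinarith [mul_le_mul_of_nonneg_right hl2 hT0.le]
  have hAl : (A + log 2) ^ 2 * A ≤ (A + 0.6932) ^ 2 * A := by gcongr; linarith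
  rw [div_add_one hl0.ne', div_mul_eq_mul_div, div_div,
    div_le_div_iff₀ (by positivity) (by linarith)]
  nlinarith

lemma sum_probQDvd_div_le (n : ℕ) (hn : 21 ≤ n) :
    (∑ k ∈ Icc 1 n, probQDvd (n / k) k / k) / harmonic n ≤ 6.4 * log (log n) / log n := by
  set A := log n
  set B := log A
  have hnR : (21 : ℝ) ≤ n := by exact_mod_cast hn
  have hAH : A ≤ harmonic n := by
    have := log_add_one_le_harmonic n
    push_cast at this
    exact (log_le_log (by linarith) (by linarith)).trans this
  have hAe : exp 1 ≤ A := by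
    have := exp_one_lt_d9
    have := log_two_gt_d9
    have h16 : log (2 ^ 4) ≤ A := log_le_log (by norm_num) (by linarith)
    rw [log_pow] at h16
    push_cast at h16
    linarith
  have hA0 : 0 < A := (exp_pos 1).trans_le hAe
  have hH0 : (0 : ℝ) < harmonic n := hA0.trans_le hAH
  rcases le_total B 2 with hB | hB
  · calc _ ≤ (harmonic n : ℝ) / harmonic n := by
          gcongr
          rw [harmonic_eq_sum_Icc]
          push_cast
          gcongr with k
          rw [div_eq_mul_inv]
          exact mul_le_of_le_one_left (by positivity) (probQDvd_le_one _ _)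
      _ = 1 := div_self hH0.ne'
      _ ≤ 6.4 * B / A := by
          rw [le_div_iff₀ hA0, one_mul]
          exact self_le_mul_log_of_log_le_two hAe hB
  · have hA7 : 7 ≤ A := by
      have := exp_one_gt_d9
      have : exp 1 * exp 1 ≤ A := by
        rw [← exp_add, ← exp_log hA0]
        exact exp_le_exp.2 (by linarith)
      nlinarith
    set T := ⌊A ^ 3⌋₊
    have hT_ge : A ^ 3 - 1 ≤ T := by linarith [Nat.lt_floor_add_one (A ^ 3)]
    have hT0 : 0 < T := by
      have : (0 : ℝ) < T := by nlinarith [pow_le_pow_left₀ (by norm_num) hA7 3]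
      exact_mod_cast this
    have hlogT : log T ≤ 3 * B := by
      rw [show 3 * B = log (A ^ 3) by rw [log_pow]; norm_num; rfl]
      exact log_le_log (by positivity) (Nat.floor_le (by positivity))
    have hl : 0 < log 2 := log_pos one_lt_two
    set c := (A / log 2 + 1) * (A + log 2) / (T * log 2)
    have hsum := sum_div_natCast_le_of_le_on_Icc n T hT0 (r := fun k => probQDvd (n / k) k)
      (c := c) (by positivity) (fun k => probQDvd_le_one _ _)
      fun k hk => probQDvd_div_le_of_mem_Icc hT0 hk
    have hlogT0 := log_natCast_nonneg T
    calc _ ≤ (c * harmonic n + (1 + log T)) / harmonic n := by gcongr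
      _ = c + (1 + log T) / harmonic n := by rw [add_div, mul_div_cancel_right₀ _ hH0.ne']
      _ ≤ 3 / A + (1 + 3 * B) / A := by
          gcongr
          exact head_bound_le_three_div hA7 hT_ge
      _ ≤ 6.4 * B / A := by
          rw [← add_div]
          gcongr
          linarith

section Probability

variable {Ω α β : Type*} [MeasurableSpace Ω] {μ : Measure Ω}

lemma measure_preimage_finset_eq_card_inter_mul [MeasurableSpace α] [MeasurableSingletonClass α]
    [DecidableEq α] {X : Ω → α} (hX : Measurable X) {S : Finset α} {c : ℝ≥0∞}
    (hXS : ∀ a, μ (X ⁻¹' {a}) = if a ∈ S then c else 0) (s : Finset α) :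
    μ (X ⁻¹' s) = #(s ∩ S) * c := by
  rw [← sum_measure_preimage_singleton s fun a _ => hX (measurableSet_singleton a)]
  simp_rw [hXS]
  rw [sum_ite_mem, sum_const, nsmul_eq_mul]

theorem ProbabilityTheory.IndepFun.measure_setOf_mem_eq_tsum [MeasurableSpace α]
    [MeasurableSpace β] [Countable β] [MeasurableSingletonClass β] {X : Ω → α} {Y : Ω → β}
    (hXY : IndepFun X Y μ) (hX : Measurable X) (hY : Measurable Y) {R : β → Set α}
    (hR : ∀ b, MeasurableSet (R b)) :
    μ {ω | X ω ∈ R (Y ω)} = ∑' b, μ (Y ⁻¹' {b}) * μ (X ⁻¹' R b) := by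
  have hsplit : {ω | X ω ∈ R (Y ω)} = ⋃ b, Y ⁻¹' {b} ∩ X ⁻¹' R b := by
    ext ω
    simp
  rw [hsplit, measure_iUnion]
  · congr 1 with b
    rw [Set.inter_comm, hXY.measure_inter_preimage_eq_mul _ _ (hR b) (measurableSet_singleton b),
      mul_comm]
  · exact fun b b' hbb' =>
      (pairwise_disjoint_fiber Y hbb').mono Set.inter_subset_left Set.inter_subset_left
  · exact fun b => (hY (measurableSet_singleton b)).inter (hX (hR b))

lemma measure_setOf_dvd_eq_ofReal_probQDvd {m k : ℕ} (hk : k ≠ 0) {X : Ω → ℕ}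
    (hX : Measurable X)
    (hXS : ∀ j, μ {ω | X ω = j}
      = if j ∈ insert 1 (primesUpTo m) then (((primesUpTo m).card : ℝ≥0∞) + 1)⁻¹ else 0) :
    μ {ω | X ω ∣ k} = ENNReal.ofReal (probQDvd m k) := by
  have hdvd : {ω | X ω ∣ k} = X ⁻¹' k.divisors := by
    ext ω
    simp [hk]
  rw [hdvd, measure_preimage_finset_eq_card_inter_mul hX hXS, probQDvd,
    ENNReal.ofReal_div_of_pos (by positivity), div_eq_mul_inv]
  norm_cast

end Probability

theorem prob_Q_divides_Hn_general
    {Ω : Type*} [MeasureSpace Ω]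
    (n : ℕ) (hn : 21 ≤ n)
    (L : ℝ) (hL : L = ∑ j ∈ Finset.Icc 1 n, (1 : ℝ) / j)
    -- `H` has harmonic distribution on `{1, …, n}`
    (H : Ω → ℕ) (hHmeas : Measurable H)
    (hH : ∀ k : ℕ, ℙ {ω | H ω = k}
      = if k ∈ Finset.Icc 1 n then ENNReal.ofReal (1 / (L * k)) else 0)
    -- `Q k` is uniform on `{1} ∪ {p prime : p ≤ k}`
    (Q : ℕ → Ω → ℕ) (hQmeas : ∀ k, Measurable (Q k))
    (hQ : ∀ k : ℕ, 1 ≤ k → ∀ j : ℕ, ℙ {ω | Q k ω = j}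
      = if j ∈ insert 1 (primesUpTo k) then (((primesUpTo k).card : ℝ≥0∞) + 1)⁻¹ else 0)
    -- the family `{Q k}` is independent of `H`
    (hindep : IndepFun (fun ω => fun k => Q k ω) H ℙ) :
    (ℙ {ω | Q (n / H ω) ω ∣ H ω}).toReal ≤ 6.4 * Real.log (Real.log n) / Real.log n := by
  have hL_eq : L = harmonic n := by
    simp [hL, harmonic_eq_sum_Icc]
  have hweight_nonneg (k : ℕ) : 0 ≤ 1 / (L * k) :=
    one_div_nonneg.2 (mul_nonneg (hL ▸ sum_nonneg fun j _ => by positivity) k.cast_nonneg)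
  have hprob : ℙ {ω | Q (n / H ω) ω ∣ H ω}
      = ENNReal.ofReal (∑ k ∈ Icc 1 n, 1 / (L * k) * probQDvd (n / k) k) := by
    refine (hindep.measure_setOf_mem_eq_tsum (measurable_pi_lambda _ hQmeas) hHmeas
      (R := fun k => {g | g (n / k) ∣ k}) fun _ => by measurability).trans ?_
    rw [tsum_eq_sum (s := Icc 1 n) fun k hk => by simp [Set.preimage, hH, hk],
      ENNReal.ofReal_sum_of_nonneg fun k _ => mul_nonneg (hweight_nonneg k) (probQDvd_nonneg _ _)]
    refine sum_congr rfl fun k hk => ?_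
    obtain ⟨hk1, hkn⟩ := mem_Icc.1 hk
    rw [ENNReal.ofReal_mul (hweight_nonneg k)]
    exact congr_arg₂ _ ((hH k).trans (if_pos hk)) (measure_setOf_dvd_eq_ofReal_probQDvd
      (by omega) (hQmeas _) (hQ _ (Nat.div_pos hkn hk1)))
  rw [hprob, ENNReal.toReal_ofReal
    (sum_nonneg fun k _ => mul_nonneg (hweight_nonneg k) (probQDvd_nonneg _ _))]
  convert sum_probQDvd_div_le n hn using 1
  rw [hL_eq, sum_div]
  exact sum_congr rfl fun k _ => by ring

/-- **Lemma 3.2: the probability that `Q(⌊n/H_n⌋)` divides `H_n` is small**. -/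
theorem prob_Q_divides_Hn
    {Ω : Type*} [MeasureSpace Ω] [IsProbabilityMeasure (ℙ : Measure Ω)]
    (n : ℕ) (hn : 21 ≤ n)
    (L : ℝ) (hL : L = ∑ j ∈ Finset.Icc 1 n, (1 : ℝ) / j)
    -- `H` has harmonic distribution on `{1, …, n}`
    (H : Ω → ℕ) (hHmeas : Measurable H)
    (hH : ∀ k : ℕ, ℙ {ω | H ω = k}
      = if k ∈ Finset.Icc 1 n then ENNReal.ofReal (1 / (L * k)) else 0)
    -- `Q k` is uniform on `{1} ∪ {p prime : p ≤ k}`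
    (Q : ℕ → Ω → ℕ) (hQmeas : ∀ k, Measurable (Q k))
    (hQ : ∀ k : ℕ, 1 ≤ k → ∀ j : ℕ, ℙ {ω | Q k ω = j}
      = if j ∈ insert 1 (primesUpTo k) then (((primesUpTo k).card : ℝ≥0∞) + 1)⁻¹ else 0)
    -- the family `{Q k}` is independent of `H`
    (hindep : IndepFun (fun ω => fun k => Q k ω) H ℙ) :
    (ℙ {ω | Q (n / H ω) ω ∣ H ω}).toReal ≤ 6.4 * Real.log (Real.log n) / Real.log n :=
  prob_Q_divides_Hn_general n hn L hL H hHmeas hH Q hQmeas hQ hindep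
end

section
/- Let n ≥ 21 and let ω(k) denote the number of distinct prime divisors of k. Let J_n be uniformly distributed on {1, …, n}. Then |E[ω(J_n)] − log log n| ≤ 1.5. -/
/-!
Averaging over `k ≤ n` and swapping the order of summation,
`E[ω(J_n)] = (1/n) ∑_{p ≤ n} ⌊n/p⌋`, which lies between `S(n) - π(n)/n` and `S(n)`, where
`S(n) = ∑_{p ≤ n} 1/p` and `π(n) ≤ n/2 + 1`. It remains to compare `S(n)` with `log log n`.

Above: `∑_{p ≤ n} ⌊n/p⌋ log p = ∑_{k ≤ n} ∑_{p ∣ k} log p ≤ n log n` together with Chebyshev's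
`θ(n) ≤ n log 4` gives Mertens' bound `M(n) = ∑_{p ≤ n} log p / p ≤ log n + log 4`, and partial
summation turns this into `S(n) ≤ log log n + 1.35` for `n ≥ 16`.

Below: `log n ≤ H_n ≤ ∏_{p ≤ n} (1 - 1/p)⁻¹` by expanding the Euler product over `n`-smooth
numbers, and `log (1 - 1/p)⁻¹ ≤ 1/(p-1) = 1/p + 1/(p(p-1))` with `∑_p 1/(p(p-1)) ≤ 11/12`.
-/

open MeasureTheory ProbabilityTheory Finset
open scoped ProbabilityTheory ENNReal

open Real
open Nat (primesLE)

section Uniform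

variable {Ω : Type*} [MeasurableSpace Ω] {μ : Measure Ω} {n : ℕ} {J : Ω → ℕ}

lemma map_eq_smul_sum_dirac_of_uniform_Icc (hJmeas : Measurable J)
    (hJ : ∀ k : ℕ, μ {ω | J ω = k} = if k ∈ Icc 1 n then ((n : ℝ≥0∞))⁻¹ else 0) :
    μ.map J = (n : ℝ≥0∞)⁻¹ • ∑ k ∈ Icc 1 n, Measure.dirac k := by
  refine Measure.ext_iff_singleton.mpr fun k => ?_
  rw [Measure.map_apply hJmeas (measurableSet_singleton k)]
  simp only [Set.preimage, Set.mem_singleton_iff, hJ k, Measure.smul_apply,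
    Measure.coe_finsetSum, Finset.sum_apply, smul_eq_mul, Measure.dirac_apply,
    Set.indicator_apply, Pi.one_apply, Finset.sum_ite_eq']
  split_ifs <;> simp

lemma integral_comp_of_uniform_Icc {E : Type*} [NormedAddCommGroup E] [NormedSpace ℝ E]
    [CompleteSpace E] (hJmeas : Measurable J)
    (hJ : ∀ k : ℕ, μ {ω | J ω = k} = if k ∈ Icc 1 n then ((n : ℝ≥0∞))⁻¹ else 0) (g : ℕ → E) :
    ∫ ω, g (J ω) ∂μ = (n : ℝ)⁻¹ • ∑ k ∈ Icc 1 n, g k := by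
  rw [← integral_map hJmeas.aemeasurable .of_discrete,
    map_eq_smul_sum_dirac_of_uniform_Icc hJmeas hJ, integral_smul_measure,
    integral_finsetSum_measure fun k _ => integrable_dirac (by simp)]
  simp [integral_dirac]

end Uniform

lemma primeFactors_eq_filter_primesLE {n k : ℕ} (hk : k ∈ Icc 1 n) :
    k.primeFactors = {p ∈ primesLE n | p ∣ k} := by
  rw [mem_Icc] at hk
  ext p
  simp only [Nat.mem_primeFactors, mem_filter, Nat.mem_primesLE]
  exact ⟨fun ⟨hp, hpk, _⟩ => ⟨⟨(Nat.le_of_dvd hk.1 hpk).trans hk.2, hp⟩, hpk⟩,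
    fun ⟨⟨_, hp⟩, hpk⟩ => ⟨hp, hpk, by omega⟩⟩

lemma sum_Icc_sum_primeFactors {M : Type*} [AddCommMonoid M] (n : ℕ) (f : ℕ → M) :
    ∑ k ∈ Icc 1 n, ∑ p ∈ k.primeFactors, f p = ∑ p ∈ primesLE n, (n / p) • f p := by
  rw [sum_congr rfl fun k hk => by rw [primeFactors_eq_filter_primesLE hk, sum_filter],
    sum_comm]
  refine sum_congr rfl fun p _ => ?_
  rw [← sum_filter, sum_const, ← Nat.Ioc_filter_dvd_card_eq_div]
  rfl

lemma div_sub_one_lt_cast_div (m n : ℕ) : (m : ℝ) / n - 1 < ((m / n : ℕ) : ℝ) := by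
  simpa [Nat.floor_div_eq_div] using Nat.sub_one_lt_floor ((m : ℝ) / n)

lemma inv_mul_sum_natDiv_le_sum_inv (s : Finset ℕ) (n : ℕ) :
    (n : ℝ)⁻¹ * ∑ p ∈ s, ((n / p : ℕ) : ℝ) ≤ ∑ p ∈ s, (p : ℝ)⁻¹ := by
  rw [mul_sum]
  refine sum_le_sum fun p _ => ?_
  calc (n : ℝ)⁻¹ * ((n / p : ℕ) : ℝ) ≤ (n : ℝ)⁻¹ * (n / p) := by gcongr; exact Nat.cast_div_le
    _ ≤ (p : ℝ)⁻¹ := by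
        rw [← mul_div_assoc, div_eq_mul_inv]
        exact mul_le_of_le_one_left (by positivity) inv_mul_le_one

lemma sum_inv_sub_le_inv_mul_sum_natDiv (s : Finset ℕ) {n : ℕ} (hn : n ≠ 0) :
    ∑ p ∈ s, (p : ℝ)⁻¹ - #s / n ≤ (n : ℝ)⁻¹ * ∑ p ∈ s, ((n / p : ℕ) : ℝ) := by
  rw [mul_sum, div_eq_mul_inv, ← nsmul_eq_mul, ← sum_const, ← sum_sub_distrib]
  refine sum_le_sum fun p _ => ?_
  calc (p : ℝ)⁻¹ - (n : ℝ)⁻¹ = (n : ℝ)⁻¹ * (n / p - 1) := by field_simp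
    _ ≤ (n : ℝ)⁻¹ * ((n / p : ℕ) : ℝ) := by gcongr; exact (div_sub_one_lt_cast_div n p).le

lemma card_primesLE_le (n : ℕ) : (#(primesLE n) : ℝ) ≤ n / 2 + 1 := by
  have hπ : #(primesLE n) ≤ n / 2 + 1 := by
    rw [Nat.primesLE_card_eq_primeCounting]
    rcases lt_or_ge n 2 with hn | hn
    · interval_cases n <;> decide
    · obtain ⟨m, rfl⟩ := Nat.exists_eq_add_of_le hn
      have := Nat.primeCounting_add_le two_ne_zero le_rfl m
      rw [Nat.totient_two, show Nat.primeCounting 2 = 1 by decide] at this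
      omega
  calc (#(primesLE n) : ℝ) ≤ ((n / 2 : ℕ) : ℝ) + 1 := by exact_mod_cast hπ
    _ ≤ n / 2 + 1 := by gcongr; exact Nat.cast_div_le

lemma sum_log_primeFactors_le_log {k : ℕ} (hk : k ≠ 0) :
    ∑ p ∈ k.primeFactors, log p ≤ log k := by
  rw [← log_prod fun p hp => by exact_mod_cast (Nat.prime_of_mem_primeFactors hp).ne_zero]
  refine log_le_log
    (prod_pos fun p hp => by exact_mod_cast (Nat.prime_of_mem_primeFactors hp).pos) ?_
  rw [← Nat.cast_prod]
  exact_mod_cast Nat.le_of_dvd (Nat.pos_of_ne_zero hk) (Nat.prod_primeFactors_dvd k)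

lemma sum_primesLE_natDiv_mul_log_le (n : ℕ) :
    ∑ p ∈ primesLE n, ((n / p : ℕ) : ℝ) * log p ≤ n * log n := by
  calc ∑ p ∈ primesLE n, ((n / p : ℕ) : ℝ) * log p
      = ∑ k ∈ Icc 1 n, ∑ p ∈ k.primeFactors, log p := by
        simp [sum_Icc_sum_primeFactors, nsmul_eq_mul]
    _ ≤ ∑ k ∈ Icc 1 n, log n := sum_le_sum fun k hk => by
        rw [mem_Icc] at hk
        exact (sum_log_primeFactors_le_log (by omega)).trans
          (log_le_log (by exact_mod_cast hk.1) (by exact_mod_cast hk.2))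
    _ = n * log n := by simp [nsmul_eq_mul]

noncomputable def primeRecipSum (n : ℕ) : ℝ := ∑ p ∈ primesLE n, (p : ℝ)⁻¹

noncomputable def primeLogRecipSum (n : ℕ) : ℝ := ∑ p ∈ primesLE n, log p / p

lemma primeLogRecipSum_le {n : ℕ} (hn : n ≠ 0) : primeLogRecipSum n ≤ log n + log 4 := by
  have hθ : ∑ p ∈ primesLE n, log p ≤ log 4 * n := by
    rw [← Chebyshev.theta_eq_sum_primesLE_log]
    exact Chebyshev.theta_le_log4_mul_x n.cast_nonneg
  have hterm : ∀ p ∈ primesLE n, n * (log p / p) ≤ ((n / p : ℕ) : ℝ) * log p + log p :=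
    fun p _ =>
    calc n * (log p / p) = n / p * log p := by ring
      _ ≤ (((n / p : ℕ) : ℝ) + 1) * log p := by
        gcongr
        linarith [div_sub_one_lt_cast_div n p]
      _ = ((n / p : ℕ) : ℝ) * log p + log p := by ring
  refine le_of_mul_le_mul_left ?_ (by positivity : (0 : ℝ) < n)
  calc n * primeLogRecipSum n
      ≤ ∑ p ∈ primesLE n, (((n / p : ℕ) : ℝ) * log p + log p) := by
        rw [primeLogRecipSum, mul_sum]; exact sum_le_sum hterm
    _ ≤ n * log n + log 4 * n := by
        rw [sum_add_distrib]; exact add_le_add (sum_primesLE_natDiv_mul_log_le n) hθ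
    _ = n * (log n + log 4) := by ring

lemma sum_primesLE_succ {M : Type*} [AddCommMonoid M] (n : ℕ) (f : ℕ → M) :
    ∑ p ∈ primesLE (n + 1), f p
      = ∑ p ∈ primesLE n, f p + if (n + 1).Prime then f (n + 1) else 0 := by
  rw [Nat.primesLE_succ]
  split_ifs
  · rw [sum_insert (Nat.notMem_primesLE n), add_comm]
  · rw [add_zero]

lemma primeLogRecipSum_succ_sub (n : ℕ) :
    primeLogRecipSum (n + 1) - primeLogRecipSum n
      = log (n + 1) * (primeRecipSum (n + 1) - primeRecipSum n) := by
  simp only [primeLogRecipSum, primeRecipSum, sum_primesLE_succ, add_sub_cancel_left]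
  split_ifs <;> push_cast <;> ring

lemma div_add_log_le_div_add_log {A x y : ℝ} (hx : 0 < x) (hxy : x ≤ y) (hA : A ≤ x) :
    A / x + log x ≤ A / y + log y := by
  have hy : 0 < y := hx.trans_le hxy
  have hlog : log x - log y ≤ x / y - 1 := by
    rw [← log_div hx.ne' hy.ne']; exact log_le_sub_one_of_pos (by positivity)
  have hdiv : A / x - A / y ≤ 1 - x / y :=
    calc A / x - A / y = A * (y - x) / (x * y) := by field_simp
      _ ≤ x * (y - x) / (x * y) := by gcongr
      _ = 1 - x / y := by field_simp
  linarith

noncomputable def mertensDefect (n : ℕ) : ℝ :=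
  primeRecipSum n - (primeLogRecipSum n - log 4) / log n - log (log n)

/- A prime `p = n + 1` raises both `primeRecipSum` and `(primeLogRecipSum - log 4) / log (n + 1)`
by `1/p`; what is left is `A / log n + log log n ≤ A / log (n + 1) + log log (n + 1)` for
`A = primeLogRecipSum n - log 4 ≤ log n`. -/
lemma antitoneOn_mertensDefect : AntitoneOn mertensDefect (Set.Ici 2) := by
  refine antitoneOn_nat_Ici_of_succ_le fun n hn => ?_
  have hlog : 0 < log n := log_pos (by exact_mod_cast hn)
  have hlog_le : log n ≤ log (n + 1) := log_le_log (by positivity) (by linarith)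
  have hstep := div_add_log_le_div_add_log hlog hlog_le
    (by linarith [primeLogRecipSum_le (n := n) (by omega)] : primeLogRecipSum n - log 4 ≤ log n)
  have hsucc := primeLogRecipSum_succ_sub n
  simp only [mertensDefect]
  push_cast
  rw [show primeLogRecipSum (n + 1) - log 4 = (primeLogRecipSum n - log 4)
    + log (n + 1) * (primeRecipSum (n + 1) - primeRecipSum n) by linarith, add_div,
    mul_div_cancel_left₀ _ (hlog.trans_le hlog_le).ne']
  linarith

lemma primesLE_sixteen : primesLE 16 = {2, 3, 5, 7, 11, 13} := by decide

lemma log_four_le_primeLogRecipSum_sixteen : log 4 ≤ primeLogRecipSum 16 := by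
  have hpow (k p : ℕ) (h : 2 ^ k ≤ p) : k * log 2 ≤ log p := by
    rw [← log_pow]; exact log_le_log (by positivity) (by exact_mod_cast h)
  have := hpow 1 3 (by norm_num)
  have := hpow 2 5 (by norm_num)
  have := hpow 2 7 (by norm_num)
  have := hpow 3 11 (by norm_num)
  have := hpow 3 13 (by norm_num)
  rw [primeLogRecipSum, primesLE_sixteen, show (4 : ℝ) = 2 ^ 2 by norm_num, log_pow]
  norm_num at *
  linarith [log_pos one_lt_two]

lemma one_le_log_log_sixteen : 1 ≤ log (log 16) := by
  rw [le_log_iff_exp_le (by positivity), show (16 : ℝ) = 2 ^ 4 by norm_num, log_pow]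
  push_cast
  linarith [exp_one_lt_d9, log_two_gt_d9]

lemma primeRecipSum_le {n : ℕ} (hn : 16 ≤ n) : primeRecipSum n ≤ log (log n) + 1.35 := by
  have hdefect : mertensDefect n ≤ mertensDefect 16 :=
    antitoneOn_mertensDefect (by norm_num) (by simpa using hn.trans' (by norm_num)) hn
  have h16 : mertensDefect 16 ≤ 0.35 := by
    have hS : primeRecipSum 16 = 40361 / 30030 := by
      rw [primeRecipSum, primesLE_sixteen]; norm_num
    have : 0 ≤ (primeLogRecipSum 16 - log 4) / log 16 :=
      div_nonneg (by linarith [log_four_le_primeLogRecipSum_sixteen]) (log_nonneg (by norm_num))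
    rw [mertensDefect, hS]
    push_cast
    linarith [one_le_log_log_sixteen]
  have hratio : (primeLogRecipSum n - log 4) / log n ≤ 1 := by
    rw [div_le_one (log_pos (by exact_mod_cast hn.trans_lt' (by norm_num)))]
    linarith [primeLogRecipSum_le (n := n) (by omega)]
  rw [mertensDefect] at hdefect
  linarith

lemma sum_Icc_inv_le_prod_primesLE (n : ℕ) :
    ∑ k ∈ Icc 1 n, (k : ℝ)⁻¹ ≤ ∏ p ∈ primesLE n, (1 - (p : ℝ)⁻¹)⁻¹ := by
  let f : ℕ →* ℝ := invMonoidHom.comp (Nat.castRingHom ℝ).toMonoidHom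
  have hf {p : ℕ} (hp : p.Prime) : ‖f p‖ < 1 := by
    have : (1 : ℝ) < p := by exact_mod_cast hp.one_lt
    simpa [f, abs_of_pos (zero_lt_one.trans this)] using inv_lt_one_of_one_lt₀ this
  have hsum := (EulerProduct.summable_and_hasSum_smoothNumbers_prod_primesBelow_geometric
    hf (n + 1)).2
  have hsub : ∀ k ∈ Icc 1 n, k ∈ (n + 1).smoothNumbers := fun k hk => by
    rw [mem_Icc] at hk; exact Nat.mem_smoothNumbers_of_lt (by omega) (by omega)
  refine le_of_eq_of_le ?_ (sum_le_hasSum ((Icc 1 n).subtype (· ∈ (n + 1).smoothNumbers))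
    (fun k _ => inv_nonneg.mpr k.1.cast_nonneg) hsum)
  rw [sum_subtype_eq_sum_filter (f := fun k : ℕ => (k : ℝ)⁻¹), filter_true_of_mem hsub]

lemma log_inv_one_sub_inv_le {x : ℝ} (hx : 1 < x) : log (1 - x⁻¹)⁻¹ ≤ (x - 1)⁻¹ := by
  have hx0 : 0 < x - 1 := by linarith
  have h : (1 - x⁻¹)⁻¹ = 1 + (x - 1)⁻¹ := by field_simp; ring
  rw [h]
  linarith [log_le_sub_one_of_pos (by positivity : 0 < 1 + (x - 1)⁻¹)]

lemma sum_Icc_inv_sub_one_sub_inv {n : ℕ} (hn : 1 ≤ n) :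
    ∑ m ∈ Icc 2 n, (((m : ℝ) - 1)⁻¹ - (m : ℝ)⁻¹) = 1 - (n : ℝ)⁻¹ := by
  induction n, hn using Nat.le_induction with
  | base => simp
  | succ n hn ih =>
    rw [sum_Icc_succ_top (by omega), ih]
    push_cast
    ring

lemma sum_primesLE_inv_sub_one_sub_inv_le {n : ℕ} (hn : 4 ≤ n) :
    ∑ p ∈ primesLE n, (((p : ℝ) - 1)⁻¹ - (p : ℝ)⁻¹) ≤ 11 / 12 := by
  have hsub : primesLE n ⊆ (Icc 2 n).erase 4 := fun p hp => by
    have hp := Nat.mem_primesLE.mp hp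
    refine mem_erase.mpr ⟨?_, mem_Icc.mpr ⟨hp.2.two_le, hp.1⟩⟩
    rintro rfl
    exact absurd hp.2 (by decide)
  have hnonneg : ∀ m ∈ (Icc 2 n).erase 4, m ∉ primesLE n →
      0 ≤ ((m : ℝ) - 1)⁻¹ - (m : ℝ)⁻¹ := by
    intro m hm _
    have : (2 : ℝ) ≤ m := by exact_mod_cast (mem_Icc.mp (mem_of_mem_erase hm)).1
    rw [sub_nonneg]
    exact inv_anti₀ (by linarith) (by linarith)
  calc ∑ p ∈ primesLE n, (((p : ℝ) - 1)⁻¹ - (p : ℝ)⁻¹)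
      ≤ ∑ m ∈ (Icc 2 n).erase 4, (((m : ℝ) - 1)⁻¹ - (m : ℝ)⁻¹) :=
        sum_le_sum_of_subset_of_nonneg hsub hnonneg
    _ = 1 - (n : ℝ)⁻¹ - 1 / 12 := by
        rw [sum_erase_eq_sub (mem_Icc.mpr ⟨by norm_num, hn⟩),
          sum_Icc_inv_sub_one_sub_inv (by omega)]
        norm_num
    _ ≤ 11 / 12 := by linarith [inv_nonneg.mpr (n.cast_nonneg : (0 : ℝ) ≤ n)]

lemma log_log_le_primeRecipSum_add {n : ℕ} (hn : 4 ≤ n) :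
    log (log n) ≤ primeRecipSum n + 11 / 12 := by
  have hprime_gt_one : ∀ p ∈ primesLE n, (1 : ℝ) < p := fun p hp => by
    exact_mod_cast (Nat.prime_of_mem_primesLE hp).one_lt
  have hlog_le_prod : log n ≤ ∏ p ∈ primesLE n, (1 - (p : ℝ)⁻¹)⁻¹ :=
    calc log n ≤ log (n + 1) := log_le_log (by positivity) (by linarith)
      _ ≤ ∑ k ∈ Icc 1 n, (k : ℝ)⁻¹ := by
        simpa [harmonic_eq_sum_Icc] using log_add_one_le_harmonic n
      _ ≤ _ := sum_Icc_inv_le_prod_primesLE n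
  calc log (log n)
      ≤ log (∏ p ∈ primesLE n, (1 - (p : ℝ)⁻¹)⁻¹) :=
        log_le_log (log_pos (by exact_mod_cast (by omega : 1 < n))) hlog_le_prod
    _ = ∑ p ∈ primesLE n, log (1 - (p : ℝ)⁻¹)⁻¹ := by
        refine log_prod fun p hp => inv_ne_zero (sub_ne_zero.mpr ?_)
        exact (inv_lt_one_of_one_lt₀ (hprime_gt_one p hp)).ne'
    _ ≤ ∑ p ∈ primesLE n, ((p : ℝ) - 1)⁻¹ :=
        sum_le_sum fun p hp => log_inv_one_sub_inv_le (hprime_gt_one p hp)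
    _ = primeRecipSum n + ∑ p ∈ primesLE n, (((p : ℝ) - 1)⁻¹ - (p : ℝ)⁻¹) := by
        rw [primeRecipSum, ← sum_add_distrib]; simp
    _ ≤ primeRecipSum n + 11 / 12 := by
        linarith [sum_primesLE_inv_sub_one_sub_inv_le hn]

theorem expectation_omega_Jn_general
    {Ω : Type*} [MeasureSpace Ω]
    (n : ℕ) (hn : 21 ≤ n)
    -- `J` is uniform on `{1, …, n}`
    (J : Ω → ℕ) (hJmeas : Measurable J)
    (hJ : ∀ k : ℕ, ℙ {ω | J ω = k} = if k ∈ Finset.Icc 1 n then ((n : ℝ≥0∞))⁻¹ else 0) :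
    |(∫ ω, ((J ω).primeFactors.card : ℝ) ∂ℙ) - Real.log (Real.log n)| ≤ 1.5 := by
  have hE : ∫ ω, ((J ω).primeFactors.card : ℝ) ∂ℙ
      = (n : ℝ)⁻¹ * ∑ p ∈ primesLE n, ((n / p : ℕ) : ℝ) := by
    rw [integral_comp_of_uniform_Icc hJmeas hJ (fun k => (k.primeFactors.card : ℝ)), smul_eq_mul]
    congr 1
    simpa using sum_Icc_sum_primeFactors n (fun _ => (1 : ℝ))
  have hupper := inv_mul_sum_natDiv_le_sum_inv (primesLE n) n
  have hlower := sum_inv_sub_le_inv_mul_sum_natDiv (primesLE n) (by omega : n ≠ 0)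
  have hS_le := primeRecipSum_le (by omega : 16 ≤ n)
  have hS_ge := log_log_le_primeRecipSum_add (by omega : 4 ≤ n)
  have hcard : (#(primesLE n) : ℝ) / n ≤ 1 / 2 + 1 / 21 := by
    have : (21 : ℝ) ≤ n := by exact_mod_cast hn
    rw [div_le_iff₀ (by positivity)]
    nlinarith [card_primesLE_le n]
  rw [primeRecipSum] at hS_le hS_ge
  rw [hE, abs_le]
  constructor <;> linarith

/-- **Lemma B.1, eq. (B.1)**: the expectation of `ω(J_n)`, the number of distinct prime
factors of a uniform random integer on `{1, …, n}`, is within `1.5` of `log log n`. -/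
theorem expectation_omega_Jn
    {Ω : Type*} [MeasureSpace Ω] [IsProbabilityMeasure (ℙ : Measure Ω)]
    (n : ℕ) (hn : 21 ≤ n)
    -- `J` is uniform on `{1, …, n}`
    (J : Ω → ℕ) (hJmeas : Measurable J)
    (hJ : ∀ k : ℕ, ℙ {ω | J ω = k} = if k ∈ Finset.Icc 1 n then ((n : ℝ≥0∞))⁻¹ else 0) :
    |(∫ ω, ((J ω).primeFactors.card : ℝ) ∂ℙ) - Real.log (Real.log n)| ≤ 1.5 :=
  expectation_omega_Jn_general n hn J hJmeas hJ
end
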